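/- Let G be an open (D+1)-colored graph. For each color c ∈ {1,…,D}, every external vertex of G is the endpoint of exactly one maximal (0c)-bicolored path, and the other endpoint of this path is an external vertex of the opposite shading; consequently the maximal (0c)-bicolored paths define, for each c, a bijection between the external black vertices and the external white vertices of G, and therefore the boundary graph ∂G is a closed D-colored graph on the external vertices of G (in particular, the boundary of a (D+1)-colored graph is a D-colored graph). -/
import Mathlib


/-!  Open colored graphs. -/

/-- An open `(D+1)`-colored graph with colors `{0,1,…,D}`: finite sets `W` (white) and
`B` (black) of vertices, bijections `σ c : W ≃ B` for the colors `c = 1,…,D` (indexed by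
`Fin D`), and color-0 data: subsets `W₀ ⊆ W` and `B₀ ⊆ B` and a map `σ₀` which (for a
proper graph, see `OGraph.IsProper`) restricts to a bijection from `W₀` onto `B₀`; the
color-0 edges are the pairs `(w, σ₀ w)` with `w ∈ W₀`.  The vertices outside `W₀ ∪ B₀`
are the external vertices. -/
structure OGraph (D : ℕ) where
  W : Type
  B : Type
  finW : Finite W
  finB : Finite B
  σ : Fin D → W ≃ B
  W₀ : Set W
  B₀ : Set B
  σ₀ : W → B

namespace OGraph

variable {D : ℕ}

/-- The color-0 data is a bijection from `W₀` onto `B₀`. -/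
def IsProper (G : OGraph D) : Prop := Set.BijOn G.σ₀ G.W₀ G.B₀

/-- A closed graph is an open graph with no external vertices. -/
def IsClosed (G : OGraph D) : Prop := G.W₀ = Set.univ ∧ G.B₀ = Set.univ

/-- One step along a (0c)-bicolored path: from the white vertex `w` walk along the
color-`c` edge to `σ_c w` and then back along a color-0 edge to the white vertex `w'`. -/
def Step (G : OGraph D) (c : Fin D) (w w' : G.W) : Prop :=
  w' ∈ G.W₀ ∧ G.σ c w ∈ G.B₀ ∧ G.σ₀ w' = G.σ c w

/-- Boundary adjacency (the color-`c` edges of the boundary graph `∂G`): the external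
vertices `w` and `b` are the two endpoints of a maximal (0c)-bicolored path of `G`. -/
def BdryAdj (G : OGraph D) (c : Fin D) (w : G.W) (b : G.B) : Prop :=
  w ∉ G.W₀ ∧ b ∉ G.B₀ ∧
    ∃ w' : G.W, Relation.ReflTransGen (G.Step c) w w' ∧ G.σ c w' = b

/-- Adjacency of vertices of an open colored graph (an edge of any color joins them). -/
def Adj (G : OGraph D) : G.W ⊕ G.B → G.W ⊕ G.B → Prop
  | Sum.inl w, Sum.inr b => (∃ c, G.σ c w = b) ∨ (w ∈ G.W₀ ∧ G.σ₀ w = b)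
  | Sum.inr b, Sum.inl w => (∃ c, G.σ c w = b) ∨ (w ∈ G.W₀ ∧ G.σ₀ w = b)
  | Sum.inl _, Sum.inl _ => False
  | Sum.inr _, Sum.inr _ => False

/-- A graph is connected if any two of its vertices are joined by a path of edges. -/
def Connected (G : OGraph D) : Prop :=
  ∀ x y : G.W ⊕ G.B, Relation.ReflTransGen G.Adj x y

/-- An open 4-colored graph (colors `{0,1,2,3}`; the colors `1,2,3` are indexed by
`Fin 3`) is a Feynman graph of the φ₃⁴-theory iff every connected component of the
3-colored graph obtained by deleting all color-0 edges is one of the quartic vertices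
`V₁, V₂, V₃`: the white vertices pair up, `w` with a partner `w' ≠ w`, so that for some
color `i` the two edges at `w` of the colors `j ≠ i` end at the same black vertex as the
color-`i` edge of `w'`, and vice versa. -/
def Phi34 (G : OGraph 3) : Prop :=
  ∀ w : G.W, ∃ i : Fin 3, ∃ w' : G.W, w' ≠ w ∧
    (∀ j : Fin 3, j ≠ i → G.σ j w = G.σ i w') ∧
    (∀ j : Fin 3, j ≠ i → G.σ j w' = G.σ i w)

/-- Connected sum of two open `(D+1)`-colored graphs along the color-0 edges
`(wg, σ₀ wg)` of `G` and `(wh, σ₀ wh)` of `H`: delete the two edges and add the color-0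
edges `(wg, H.σ₀ wh)` and `(wh, G.σ₀ wg)`; all other edges are kept. -/
noncomputable def connSum0 (G H : OGraph D) (wg : G.W) (wh : H.W) : OGraph D where
  W := G.W ⊕ H.W
  B := G.B ⊕ H.B
  finW := by haveI := G.finW; haveI := H.finW; exact inferInstance
  finB := by haveI := G.finB; haveI := H.finB; exact inferInstance
  σ := fun c => (G.σ c).sumCongr (H.σ c)
  W₀ := Sum.inl '' G.W₀ ∪ Sum.inr '' H.W₀
  B₀ := Sum.inl '' G.B₀ ∪ Sum.inr '' H.B₀
  σ₀ := fun x =>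
    letI : DecidableEq (G.W ⊕ H.W) := Classical.decEq _
    if x = Sum.inl wg then Sum.inr (H.σ₀ wh)
    else if x = Sum.inr wh then Sum.inl (G.σ₀ wg)
    else Sum.map G.σ₀ H.σ₀ x

-- determinism helper
theorem rtg_det {α : Type*} {R : α → α → Prop}
    (hdet : ∀ a b₁ b₂, R a b₁ → R a b₂ → b₁ = b₂)
    {a x : α} (hx : Relation.ReflTransGen R a x) :
    ∀ y, Relation.ReflTransGen R a y →
      Relation.ReflTransGen R x y ∨ Relation.ReflTransGen R y x := by
  induction hx using Relation.ReflTransGen.head_induction_on with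
  | refl => exact fun y hy => Or.inl hy
  | head hab hbx ih =>
    intro y hy
    rcases hy.cases_head with rfl | ⟨c', hac', hc'y⟩
    · exact Or.inr (Relation.ReflTransGen.head hab hbx)
    · cases hdet _ _ _ hab hac'
      exact ih y hc'y

theorem step_det (G : OGraph D) (hG : G.IsProper) (c : Fin D) {w w₁ w₂ : G.W} (h₁ : G.Step c w w₁) (h₂ : G.Step c w w₂) : w₁ = w₂ :=
  hG.2.1 h₁.1 h₂.1 (by rw [h₁.2.2, h₂.2.2])

theorem step_codet (G : OGraph D) (c : Fin D) {w u₁ u₂ : G.W} (h₁ : G.Step c u₁ w) (h₂ : G.Step c u₂ w) : u₁ = u₂ :=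
  (G.σ c).injective (by rw [← h₁.2.2, ← h₂.2.2])

open Classical in
noncomputable def nxt (G : OGraph D) (hG : G.IsProper) (c : Fin D) (w : G.W) : G.W :=
  if h : G.σ c w ∈ G.B₀ then (hG.2.2 h).choose else w

theorem nxt_step (G : OGraph D) (hG : G.IsProper) (c : Fin D) {w : G.W} (h : G.σ c w ∈ G.B₀) : G.Step c w (nxt G hG c w) := by
  have hs := (hG.2.2 h).choose_spec
  refine ⟨?_, h, ?_⟩ <;> rw [nxt, dif_pos h]
  · exact hs.1
  · exact hs.2

open Classical in
noncomputable def prv (G : OGraph D) (c : Fin D) (v : G.W) : G.W :=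
  if v ∈ G.W₀ then (G.σ c).symm (G.σ₀ v) else v

theorem prv_step (G : OGraph D) (hG : G.IsProper) (c : Fin D) {v : G.W} (h : v ∈ G.W₀) : G.Step c (prv G c v) v := by
  have : G.σ c (prv G c v) = G.σ₀ v := by rw [prv, if_pos h]; exact (G.σ c).apply_symm_apply _
  exact ⟨h, this ▸ hG.1 h, this.symm⟩

theorem exists_stuck (G : OGraph D) (hG : G.IsProper) (c : Fin D) {w : G.W} (hw : w ∉ G.W₀) :
    ∃ n, G.σ c ((nxt G hG c)^[n] w) ∉ G.B₀ := by
  by_contra hall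
  push_neg at hall
  have hstep : ∀ n, G.Step c ((nxt G hG c)^[n] w) ((nxt G hG c)^[n + 1] w) := by
    intro n
    rw [Function.iterate_succ_apply']
    exact nxt_step G hG c (hall n)
  have key : ∀ i d, (nxt G hG c)^[i + d] w = (nxt G hG c)^[i] w →
      (nxt G hG c)^[d] w = w := by
    intro i
    induction i with
    | zero => intro d hd; simpa using hd
    | succ i ih =>
      intro d hd
      apply ih
      have h1 := hstep (i + d)
      have h2 := hstep i
      have : (nxt G hG c)^[i + d + 1] w = (nxt G hG c)^[i + 1] w := by
        rw [show i + 1 + d = i + d + 1 by ring] at hd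
        exact hd
      rw [this] at h1
      exact step_codet G c h1 h2
  haveI := G.finW
  obtain ⟨i, j, hne, heq⟩ :=
    Finite.exists_ne_map_eq_of_infinite (fun n => (nxt G hG c)^[n] w)
  wlog hij : i < j generalizing i j
  · exact this j i hne.symm heq.symm (by omega)
  have hd : (nxt G hG c)^[i + (j - i)] w = (nxt G hG c)^[i] w := by
    rw [show i + (j - i) = j by omega]; exact heq.symm
  have hw' := key i (j - i) hd
  have : j - i = (j - i - 1) + 1 := by omega
  rw [this, Function.iterate_succ_apply'] at hw'
  exact hw ((hw' ▸ (nxt_step G hG c (hall _)).1 : w ∈ G.W₀))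

theorem exists_stuck' (G : OGraph D) (hG : G.IsProper) (c : Fin D) {v : G.W} (hv : G.σ c v ∉ G.B₀) :
    ∃ n, (prv G c)^[n] v ∉ G.W₀ := by
  by_contra hall
  push_neg at hall
  have hstep : ∀ n, G.Step c ((prv G c)^[n + 1] v) ((prv G c)^[n] v) := by
    intro n
    rw [Function.iterate_succ_apply']
    exact prv_step G hG c (hall n)
  have key : ∀ i d, (prv G c)^[i + d] v = (prv G c)^[i] v →
      (prv G c)^[d] v = v := by
    intro i
    induction i with
    | zero => intro d hd; simpa using hd
    | succ i ih =>
      intro d hd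
      apply ih
      have h1 := hstep (i + d)
      have h2 := hstep i
      have : (prv G c)^[i + d + 1] v = (prv G c)^[i + 1] v := by
        rw [show i + 1 + d = i + d + 1 by ring] at hd
        exact hd
      rw [this] at h1
      exact step_det G hG c h1 h2
  haveI := G.finW
  obtain ⟨i, j, hne, heq⟩ :=
    Finite.exists_ne_map_eq_of_infinite (fun n => (prv G c)^[n] v)
  wlog hij : i < j generalizing i j
  · exact this j i hne.symm heq.symm (by omega)
  have hd : (prv G c)^[i + (j - i)] v = (prv G c)^[i] v := by
    rw [show i + (j - i) = j by omega]; exact heq.symm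
  have hv' := key i (j - i) hd
  have h1 : j - i = (j - i - 1) + 1 := by omega
  have := hstep (j - i - 1)
  rw [← h1, hv'] at this
  exact hv this.2.1


end OGraph

/-- Let `G` be an open `(D+1)`-colored graph.  For each color
`c ∈ {1,…,D}`, every external vertex of `G` is the endpoint of exactly one maximal
(0c)-bicolored path, whose other endpoint is an external vertex of the opposite shading;
consequently the maximal (0c)-bicolored paths define a bijection between the external
white and the external black vertices, so that the boundary graph `∂G` is a closed
`D`-colored graph on the external vertices of `G`. -/
theorem boundary_is_closed_colored_graph {D : ℕ} (G : OGraph D) (hG : G.IsProper)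
    (c : Fin D) :
    (∀ w : G.W, w ∉ G.W₀ → ∃! b : G.B, G.BdryAdj c w b) ∧
    (∀ b : G.B, b ∉ G.B₀ → ∃! w : G.W, G.BdryAdj c w b) ∧
    ∃ e : {w : G.W // w ∉ G.W₀} ≃ {b : G.B // b ∉ G.B₀},
      ∀ w : {w : G.W // w ∉ G.W₀}, G.BdryAdj c w.1 (e w).1 := by
  classical
  have stuckF : ∀ {x y : G.W}, G.σ c x ∉ G.B₀ →
      Relation.ReflTransGen (G.Step c) x y → x = y := by
    intro x y hx hxy
    rcases hxy.cases_head with h | ⟨z, hz, _⟩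
    · exact h
    · exact absurd hz.2.1 hx
  have stuckB : ∀ {x y : G.W}, x ∉ G.W₀ →
      Relation.ReflTransGen (Function.swap (G.Step c)) x y → x = y := by
    intro x y hx hxy
    rcases hxy.cases_head with h | ⟨z, hz, _⟩
    · exact h
    · exact absurd hz.1 hx
  -- existence: white → black
  have exW : ∀ w : G.W, w ∉ G.W₀ → ∃ b : G.B, G.BdryAdj c w b := by
    intro w hw
    have hex := OGraph.exists_stuck G hG c hw
    set N := Nat.find hex with hN
    have hNs : G.σ c ((OGraph.nxt G hG c)^[N] w) ∉ G.B₀ := Nat.find_spec hex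
    have chain : ∀ m, m ≤ N →
        Relation.ReflTransGen (G.Step c) w ((OGraph.nxt G hG c)^[m] w) := by
      intro m
      induction m with
      | zero => intro _; exact Relation.ReflTransGen.refl
      | succ m ih =>
        intro hm
        have hk : G.σ c ((OGraph.nxt G hG c)^[m] w) ∈ G.B₀ :=
          not_not.mp (Nat.find_min hex (by omega))
        refine (ih (by omega)).tail ?_
        rw [Function.iterate_succ_apply']
        exact OGraph.nxt_step G hG c hk
    exact ⟨G.σ c ((OGraph.nxt G hG c)^[N] w),
      hw, hNs, (OGraph.nxt G hG c)^[N] w, chain N le_rfl, rfl⟩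
  -- existence: black → white
  have exB : ∀ b : G.B, b ∉ G.B₀ → ∃ w : G.W, G.BdryAdj c w b := by
    intro b hb
    set v := (G.σ c).symm b with hv
    have hvb : G.σ c v = b := (G.σ c).apply_symm_apply b
    have hex := OGraph.exists_stuck' G hG c (by rw [hvb]; exact hb)
    set N := Nat.find hex with hN
    have hNs : (OGraph.prv G c)^[N] v ∉ G.W₀ := Nat.find_spec hex
    have chain : ∀ m, m ≤ N →
        Relation.ReflTransGen (G.Step c) ((OGraph.prv G c)^[m] v) v := by
      intro m
      induction m with
      | zero => intro _; exact Relation.ReflTransGen.refl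
      | succ m ih =>
        intro hm
        have hk : (OGraph.prv G c)^[m] v ∈ G.W₀ :=
          not_not.mp (Nat.find_min hex (by omega))
        refine Relation.ReflTransGen.head ?_ (ih (by omega))
        rw [Function.iterate_succ_apply']
        exact OGraph.prv_step G hG c hk
    exact ⟨(OGraph.prv G c)^[N] v, hNs, hb, v, chain N le_rfl, hvb⟩
  -- uniqueness: white → black
  have uniqW : ∀ {w : G.W} {b₁ b₂ : G.B},
      G.BdryAdj c w b₁ → G.BdryAdj c w b₂ → b₁ = b₂ := by
    intro w b₁ b₂ ⟨_, hb₁, w₁, hw₁, hσ₁⟩ ⟨_, hb₂, w₂, hw₂, hσ₂⟩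
    have hd := OGraph.rtg_det (R := G.Step c)
      (fun a x y hx hy => OGraph.step_det G hG c hx hy) hw₁ w₂ hw₂
    have : w₁ = w₂ := by
      rcases hd with h | h
      · exact stuckF (hσ₁ ▸ hb₁) h
      · exact (stuckF (hσ₂ ▸ hb₂) h).symm
    rw [← hσ₁, ← hσ₂, this]
  -- uniqueness: black → white
  have uniqB : ∀ {b : G.B} {w₁ w₂ : G.W},
      G.BdryAdj c w₁ b → G.BdryAdj c w₂ b → w₁ = w₂ := by
    intro b w₁ w₂ ⟨hw₁, hb, v₁, hv₁, hσ₁⟩ ⟨hw₂, _, v₂, hv₂, hσ₂⟩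
    have hvv : v₁ = v₂ := (G.σ c).injective (by rw [hσ₁, hσ₂])
    have hs₁ : Relation.ReflTransGen (Function.swap (G.Step c)) v₁ w₁ :=
      Relation.reflTransGen_swap.mpr hv₁
    have hs₂ : Relation.ReflTransGen (Function.swap (G.Step c)) v₁ w₂ := by
      rw [hvv]; exact Relation.reflTransGen_swap.mpr hv₂
    have hd := OGraph.rtg_det (R := Function.swap (G.Step c))
      (fun a x y hx hy => OGraph.step_codet G c hx hy) hs₁ w₂ hs₂
    rcases hd with h | h
    · exact stuckB hw₁ h
    · exact (stuckB hw₂ h).symm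
  have h1 : ∀ w : G.W, w ∉ G.W₀ → ∃! b : G.B, G.BdryAdj c w b := by
    intro w hw
    obtain ⟨b, hb⟩ := exW w hw
    exact ⟨b, hb, fun b' hb' => uniqW hb' hb⟩
  have h2 : ∀ b : G.B, b ∉ G.B₀ → ∃! w : G.W, G.BdryAdj c w b := by
    intro b hb
    obtain ⟨w, hw⟩ := exB b hb
    exact ⟨w, hw, fun w' hw' => uniqB hw' hw⟩
  refine ⟨h1, h2, ?_⟩
  have hf : ∀ w : {w : G.W // w ∉ G.W₀},
      G.BdryAdj c w.1 (h1 w.1 w.2).exists.choose :=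
    fun w => (h1 w.1 w.2).exists.choose_spec
  let f : {w : G.W // w ∉ G.W₀} → {b : G.B // b ∉ G.B₀} :=
    fun w => ⟨(h1 w.1 w.2).exists.choose, (hf w).2.1⟩
  have hbij : Function.Bijective f := by
    constructor
    · intro w₁ w₂ h
      have e : ((f w₁).1 : G.B) = (f w₂).1 := congrArg Subtype.val h
      have h₂' : G.BdryAdj c w₂.1 (f w₁).1 := by
        rw [e]; exact hf w₂
      exact Subtype.ext (uniqB (hf w₁ : G.BdryAdj c w₁.1 (f w₁).1) h₂')
    · intro b
      obtain ⟨w, hw⟩ := exB b.1 b.2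
      refine ⟨⟨w, hw.1⟩, Subtype.ext ?_⟩
      exact (h1 w hw.1).unique (hf ⟨w, hw.1⟩) hw
  exact ⟨Equiv.ofBijective f hbij, fun w => hf w⟩
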